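/- If A ∈ SL₂$ is a Clifford matrix and κ is a quaternionic spinor, then the matrix-vector product Aκ is again a quaternionic spinor. Moreover the action is transitive: for any two quaternionic spinors κ₁, κ₂ there exists A ∈ SL₂$ with Aκ₁ = κ₂. -/

import Mathlib

open Quaternion

noncomputable section

/-- The involution `q* = a + bi + cj - dk` on quaternions (Clifford reversion). -/
def qstar (q : ℍ[ℝ]) : ℍ[ℝ] := ⟨q.re, q.imI, q.imJ, -q.imK⟩

/-- The involution `q' = a - bi - cj + dk` on quaternions. -/
def qprime (q : ℍ[ℝ]) : ℍ[ℝ] := ⟨q.re, -q.imI, -q.imJ, q.imK⟩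

/-- A paravector is an element of `ℝ + ℝi + ℝj`, i.e. a quaternion with zero `k`-component. -/
def IsParavector (q : ℍ[ℝ]) : Prop := q.imK = 0

/-- The quaternion `k`. -/
def qk : ℍ[ℝ] := ⟨0, 0, 0, 1⟩

/-- A quaternionic spinor: a pair `(ξ, η) ≠ (0,0)` with `ξ * conj η` a paravector. -/
def IsSpinor (κ : ℍ[ℝ] × ℍ[ℝ]) : Prop := κ ≠ 0 ∧ IsParavector (κ.1 * star κ.2)

/-- The bracket `{κ₁, κ₂} = ξ₁* η₂ − η₁* ξ₂`. -/
def bracket (κ₁ κ₂ : ℍ[ℝ] × ℍ[ℝ]) : ℍ[ℝ] := qstar κ₁.1 * κ₂.2 - qstar κ₁.2 * κ₂.1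

/-- Right multiplication `κ x = (ξ x, η x)`. -/
def rmul (κ : ℍ[ℝ] × ℍ[ℝ]) (x : ℍ[ℝ]) : ℍ[ℝ] × ℍ[ℝ] := (κ.1 * x, κ.2 * x)

/-- The complementary pair `κ̌ = (η', −ξ')`. -/
def qcheck (κ : ℍ[ℝ] × ℍ[ℝ]) : ℍ[ℝ] × ℍ[ℝ] := (qprime κ.2, -qprime κ.1)

/-- The real inner product on `ℍ²`: `⟨κ₁, κ₂⟩ = Re (ξ₁ ξ̄₂ + η₁ η̄₂)`. -/
def qinner (κ₁ κ₂ : ℍ[ℝ] × ℍ[ℝ]) : ℝ := (κ₁.1 * star κ₂.1 + κ₁.2 * star κ₂.2).re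

/-- The squared norm `|κ|² = |ξ|² + |η|²` on `ℍ²`. -/
def qnsq (κ : ℍ[ℝ] × ℍ[ℝ]) : ℝ := Quaternion.normSq κ.1 + Quaternion.normSq κ.2

/-- The pseudo-determinant of a 2×2 quaternionic matrix: `pdet [[a,b],[c,d]] = a* d − c* b`. -/
def pdet (A : Matrix (Fin 2) (Fin 2) ℍ[ℝ]) : ℍ[ℝ] := qstar (A 0 0) * A 1 1 - qstar (A 1 0) * A 0 1

/-- A Clifford matrix: columns are quaternionic spinors and the pseudo-determinant is 1. -/
def IsClifford (A : Matrix (Fin 2) (Fin 2) ℍ[ℝ]) : Prop :=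
  IsSpinor (A 0 0, A 1 0) ∧ IsSpinor (A 0 1, A 1 1) ∧ pdet A = 1

/-- Matrix-vector action of a 2×2 quaternionic matrix on a column vector in `ℍ²`. -/
def mact (A : Matrix (Fin 2) (Fin 2) ℍ[ℝ]) (κ : ℍ[ℝ] × ℍ[ℝ]) : ℍ[ℝ] × ℍ[ℝ] :=
  (A 0 0 * κ.1 + A 0 1 * κ.2, A 1 0 * κ.1 + A 1 1 * κ.2)

/-! The bracket `{κ₁, κ₂} = ξ₁* η₂ − η₁* ξ₂` is a quaternionic analogue of the symplectic form
on `ℍ²`. A pair is a spinor exactly when it is nonzero and `{κ, κ} = 0`, and a matrix is Clifford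
exactly when its action preserves the bracket: the column conditions and `pdet A = 1` are the
values of `{Aeᵢ, Aeⱼ}`. So Clifford matrices form a group acting on spinors, and the action is
injective because `κ` is recovered from the brackets `{e₁, κ}` and `{e₂, κ}`. Every spinor `κ`
has a spinor partner `μ` with `{κ, μ} = 1`, and the Clifford matrix with columns `κ, μ` maps `e₁`
to `κ`; transitivity follows by composing such a matrix with the inverse of another. -/

@[simp] lemma qstar_re (q : ℍ[ℝ]) : (qstar q).re = q.re := rfl
@[simp] lemma qstar_imI (q : ℍ[ℝ]) : (qstar q).imI = q.imI := rfl
@[simp] lemma qstar_imJ (q : ℍ[ℝ]) : (qstar q).imJ = q.imJ := rfl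
@[simp] lemma qstar_imK (q : ℍ[ℝ]) : (qstar q).imK = -q.imK := rfl

@[simp] lemma qstar_qstar (q : ℍ[ℝ]) : qstar (qstar q) = q := by ext <;> simp

@[simp] lemma qstar_zero : qstar (0 : ℍ[ℝ]) = 0 := by ext <;> simp

@[simp] lemma qstar_eq_zero {q : ℍ[ℝ]} : qstar q = 0 ↔ q = 0 :=
  ⟨fun h => by simpa using congrArg qstar h, fun h => by simp [h]⟩

@[simp] lemma qstar_one : qstar (1 : ℍ[ℝ]) = 1 := by ext <;> simp

lemma qstar_add (p q : ℍ[ℝ]) : qstar (p + q) = qstar p + qstar q := by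
  ext <;> simp [add_comm]

lemma qstar_sub (p q : ℍ[ℝ]) : qstar (p - q) = qstar p - qstar q := by
  ext <;> simp [neg_add_eq_sub]

lemma qstar_mul (p q : ℍ[ℝ]) : qstar (p * q) = qstar q * qstar p := by
  ext <;> simp [Quaternion.re_mul, Quaternion.imI_mul, Quaternion.imJ_mul, Quaternion.imK_mul] <;>
    ring

@[simp] lemma bracket_zero_left (κ : ℍ[ℝ] × ℍ[ℝ]) : bracket 0 κ = 0 := by
  simp [bracket]

@[simp] lemma bracket_zero_right (κ : ℍ[ℝ] × ℍ[ℝ]) : bracket κ 0 = 0 := by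
  simp [bracket]

lemma bracket_one_zero_left (κ : ℍ[ℝ] × ℍ[ℝ]) : bracket (1, 0) κ = κ.2 := by
  simp [bracket]

lemma bracket_zero_one_left (κ : ℍ[ℝ] × ℍ[ℝ]) : bracket (0, 1) κ = -κ.1 := by
  simp [bracket]

lemma bracket_self (κ : ℍ[ℝ] × ℍ[ℝ]) :
    bracket κ κ = (-2 * (κ.1 * star κ.2).imK) • qk := by
  ext <;>
    simp only [Quaternion.re_smul, Quaternion.imI_smul, Quaternion.imJ_smul, Quaternion.imK_smul] <;>
    simp [bracket, qk, Quaternion.re_mul, Quaternion.imI_mul, Quaternion.imJ_mul,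
      Quaternion.imK_mul] <;>
    ring

lemma isSpinor_iff_bracket_self (κ : ℍ[ℝ] × ℍ[ℝ]) :
    IsSpinor κ ↔ κ ≠ 0 ∧ bracket κ κ = 0 := by
  have hk : qk ≠ 0 := fun h => by simpa [qk] using congrArg QuaternionAlgebra.imK h
  simp [IsSpinor, IsParavector, bracket_self, smul_eq_zero, hk]

lemma pdet_eq_bracket (A : Matrix (Fin 2) (Fin 2) ℍ[ℝ]) :
    pdet A = bracket (A 0 0, A 1 0) (A 0 1, A 1 1) := rfl

lemma mact_one_zero (A : Matrix (Fin 2) (Fin 2) ℍ[ℝ]) : mact A (1, 0) = (A 0 0, A 1 0) := by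
  simp [mact]

lemma mact_zero_one (A : Matrix (Fin 2) (Fin 2) ℍ[ℝ]) : mact A (0, 1) = (A 0 1, A 1 1) := by
  simp [mact]

lemma mact_mul (A B : Matrix (Fin 2) (Fin 2) ℍ[ℝ]) (κ : ℍ[ℝ] × ℍ[ℝ]) :
    mact (A * B) κ = mact A (mact B κ) := by
  simp only [mact, Matrix.mul_apply, Fin.sum_univ_two]
  ext <;> noncomm_ring

lemma mact_one (κ : ℍ[ℝ] × ℍ[ℝ]) : mact 1 κ = κ := by
  simp [mact]

lemma matrix_ext_mact {A B : Matrix (Fin 2) (Fin 2) ℍ[ℝ]} (h : ∀ κ, mact A κ = mact B κ) :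
    A = B := by
  have h₁ := h (1, 0)
  have h₂ := h (0, 1)
  rw [mact_one_zero, mact_one_zero, Prod.mk.injEq] at h₁
  rw [mact_zero_one, mact_zero_one, Prod.mk.injEq] at h₂
  refine Matrix.ext fun i j => ?_
  fin_cases i <;> fin_cases j
  exacts [h₁.1, h₂.1, h₁.2, h₂.2]

lemma bracket_mact (A : Matrix (Fin 2) (Fin 2) ℍ[ℝ]) (κ₁ κ₂ : ℍ[ℝ] × ℍ[ℝ]) :
    bracket (mact A κ₁) (mact A κ₂) =
      qstar κ₁.1 * bracket (A 0 0, A 1 0) (A 0 0, A 1 0) * κ₂.1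
        + qstar κ₁.1 * pdet A * κ₂.2 - qstar κ₁.2 * qstar (pdet A) * κ₂.1
        + qstar κ₁.2 * bracket (A 0 1, A 1 1) (A 0 1, A 1 1) * κ₂.2 := by
  simp only [bracket, pdet, mact, qstar_add, qstar_sub, qstar_mul, qstar_qstar]
  noncomm_ring

lemma isClifford_iff_bracket_mact (A : Matrix (Fin 2) (Fin 2) ℍ[ℝ]) :
    IsClifford A ↔ ∀ κ₁ κ₂, bracket (mact A κ₁) (mact A κ₂) = bracket κ₁ κ₂ := by
  simp only [IsClifford, isSpinor_iff_bracket_self, pdet_eq_bracket]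
  constructor
  · rintro ⟨⟨-, h₁⟩, ⟨-, h₂⟩, h⟩ κ₁ κ₂
    rw [bracket_mact, pdet_eq_bracket, h₁, h₂, h, qstar_one, bracket]
    noncomm_ring
  · intro h
    have h₁₂ := h (1, 0) (0, 1)
    rw [mact_one_zero, mact_zero_one, bracket_one_zero_left] at h₁₂
    refine ⟨⟨?_, ?_⟩, ⟨?_, ?_⟩, h₁₂⟩
    · intro h₀
      simp [h₀] at h₁₂
    · rw [← mact_one_zero, h, bracket_one_zero_left]
    · intro h₀
      simp [h₀] at h₁₂
    · rw [← mact_zero_one, h, bracket_zero_one_left, neg_eq_zero]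

/-- Its rows are the functionals `κ ↦ -{Ae₂, κ}` and `κ ↦ {Ae₁, κ}`. -/
def pseudoInv (A : Matrix (Fin 2) (Fin 2) ℍ[ℝ]) : Matrix (Fin 2) (Fin 2) ℍ[ℝ] :=
  !![qstar (A 1 1), -qstar (A 0 1); -qstar (A 1 0), qstar (A 0 0)]

lemma mact_pseudoInv (A : Matrix (Fin 2) (Fin 2) ℍ[ℝ]) (κ : ℍ[ℝ] × ℍ[ℝ]) :
    mact (pseudoInv A) κ = (-bracket (A 0 1, A 1 1) κ, bracket (A 0 0, A 1 0) κ) := by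
  simp only [mact, pseudoInv, bracket, Matrix.of_apply, Matrix.cons_val', Matrix.cons_val_zero,
    Matrix.cons_val_one, Matrix.empty_val', Matrix.cons_val_fin_one]
  ext <;> noncomm_ring

namespace IsClifford

variable {A B : Matrix (Fin 2) (Fin 2) ℍ[ℝ]}

lemma bracket_mact (hA : IsClifford A) (κ₁ κ₂ : ℍ[ℝ] × ℍ[ℝ]) :
    bracket (mact A κ₁) (mact A κ₂) = bracket κ₁ κ₂ :=
  (isClifford_iff_bracket_mact A).1 hA κ₁ κ₂

lemma mact_eq_zero (hA : IsClifford A) {κ : ℍ[ℝ] × ℍ[ℝ]} (h : mact A κ = 0) : κ = 0 := by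
  have h₁ := hA.bracket_mact (1, 0) κ
  have h₂ := hA.bracket_mact (0, 1) κ
  rw [h, bracket_zero_right, bracket_one_zero_left] at h₁
  rw [h, bracket_zero_right, bracket_zero_one_left, zero_eq_neg] at h₂
  exact Prod.ext h₂ h₁.symm

lemma isSpinor_mact (hA : IsClifford A) {κ : ℍ[ℝ] × ℍ[ℝ]} (hκ : IsSpinor κ) :
    IsSpinor (mact A κ) := by
  rw [isSpinor_iff_bracket_self] at hκ ⊢
  exact ⟨fun h => hκ.1 (hA.mact_eq_zero h), by rw [hA.bracket_mact, hκ.2]⟩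

lemma mul (hA : IsClifford A) (hB : IsClifford B) : IsClifford (A * B) := by
  rw [isClifford_iff_bracket_mact]
  intro κ₁ κ₂
  rw [mact_mul, mact_mul, hA.bracket_mact, hB.bracket_mact]

lemma mact_pseudoInv_mact (hA : IsClifford A) (κ : ℍ[ℝ] × ℍ[ℝ]) :
    mact (pseudoInv A) (mact A κ) = κ := by
  rw [mact_pseudoInv, ← mact_zero_one, ← mact_one_zero, hA.bracket_mact, hA.bracket_mact,
    bracket_zero_one_left, bracket_one_zero_left, neg_neg]

lemma pseudoInv_mul (hA : IsClifford A) : pseudoInv A * A = 1 :=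
  matrix_ext_mact fun κ => by rw [mact_mul, mact_one, hA.mact_pseudoInv_mact]

/-- The right inverse property comes for free: `M₂(ℍ)` is Dedekind-finite. -/
lemma mul_pseudoInv (hA : IsClifford A) : A * pseudoInv A = 1 :=
  mul_eq_one_comm.1 hA.pseudoInv_mul

lemma pseudoInv (hA : IsClifford A) : IsClifford (pseudoInv A) := by
  rw [isClifford_iff_bracket_mact]
  intro κ₁ κ₂
  rw [← hA.bracket_mact, ← mact_mul, ← mact_mul, hA.mul_pseudoInv, mact_one, mact_one]

end IsClifford

lemma exists_isSpinor_bracket_eq_one {κ : ℍ[ℝ] × ℍ[ℝ]} (hκ : κ ≠ 0) :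
    ∃ μ, IsSpinor μ ∧ bracket κ μ = 1 := by
  by_cases hη : κ.2 = 0
  · have hξ : qstar κ.1 ≠ 0 := qstar_eq_zero.not.2 fun hξ => hκ (Prod.ext hξ hη)
    refine ⟨(0, (qstar κ.1)⁻¹), ⟨by simpa using hξ, by simp [IsParavector]⟩, ?_⟩
    simp [bracket, hη, hξ]
  · have hη' : qstar κ.2 ≠ 0 := qstar_eq_zero.not.2 hη
    refine ⟨(-(qstar κ.2)⁻¹, 0), ⟨by simpa using hη', by simp [IsParavector]⟩, ?_⟩
    simp [bracket, hη']

lemma exists_isClifford_mact_one_zero {κ : ℍ[ℝ] × ℍ[ℝ]} (hκ : IsSpinor κ) :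
    ∃ A, IsClifford A ∧ mact A (1, 0) = κ := by
  obtain ⟨μ, hμ, hκμ⟩ := exists_isSpinor_bracket_eq_one hκ.1
  exact ⟨!![κ.1, μ.1; κ.2, μ.2], ⟨hκ, hμ, hκμ⟩, by simp [mact]⟩

/-- Clifford matrices preserve quaternionic spinors under matrix-vector multiplication,
and the action on spinors is transitive. -/
theorem clifford_action_spinors :
    (∀ (A : Matrix (Fin 2) (Fin 2) ℍ[ℝ]) (κ : ℍ[ℝ] × ℍ[ℝ]),
      IsClifford A → IsSpinor κ → IsSpinor (mact A κ)) ∧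
    (∀ κ₁ κ₂ : ℍ[ℝ] × ℍ[ℝ], IsSpinor κ₁ → IsSpinor κ₂ →
      ∃ A : Matrix (Fin 2) (Fin 2) ℍ[ℝ], IsClifford A ∧ mact A κ₁ = κ₂) := by
  refine ⟨fun A κ hA hκ => hA.isSpinor_mact hκ, fun κ₁ κ₂ h₁ h₂ => ?_⟩
  obtain ⟨T₁, hT₁, rfl⟩ := exists_isClifford_mact_one_zero h₁
  obtain ⟨T₂, hT₂, rfl⟩ := exists_isClifford_mact_one_zero h₂
  exact ⟨T₂ * pseudoInv T₁, hT₂.mul hT₁.pseudoInv, by rw [mact_mul, hT₁.mact_pseudoInv_mact]⟩
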